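/- arXiv:2411.00197 — 5 statements merged into one kernel-verified Lean document; each statement's English description precedes it below -/
import Mathlib

section
/- Subsumption of partial-correctness Hoare Logic (Theorem 3.3, Boolean model): For every program denotation f : Σ → Set (Option Σ) and all sets P, Q ⊆ Σ, the Total Outcome Logic triple ⟨P⟩ C ⟨□Q⟩ is valid iff P is contained in the weakest liberal precondition of Q; precisely: (∀ S : Set (Option Σ), S.Nonempty → S ⊆ some '' P → F_f(S) ⊆ insert none (some '' Q)) ↔ (∀ σ ∈ P, f σ ⊆ insert none (some '' Q)). -/
/-- Extension of a program denotation `f : St → Set (Option St)` to sets of outcomes: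
`F_f(S) = (⋃ over σ with some σ ∈ S, f σ) ∪ (S ∩ {none})`. -/
def Fext {St : Type*} (f : St → Set (Option St)) (S : Set (Option St)) : Set (Option St) :=
  (⋃ σ ∈ {σ : St | some σ ∈ S}, f σ) ∪ (S ∩ {none})

/-- Subsumption of partial-correctness Hoare Logic (Boolean model). -/
theorem hoare_partial_subsumption {St : Type*} (f : St → Set (Option St)) (P Q : Set St) :
    (∀ S : Set (Option St), S.Nonempty → S ⊆ some '' P →
        Fext f S ⊆ insert none (some '' Q)) ↔
      (∀ σ ∈ P, f σ ⊆ insert none (some '' Q)) := by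
  constructor
  · intro h σ hσ x hx
    apply h {some σ} ⟨some σ, rfl⟩ (by simp [Set.subset_def, hσ])
    exact Or.inl (Set.mem_biUnion (by simp) hx)
  · intro h S _ hS x hx
    rcases hx with hx | hx
    · simp only [Set.mem_iUnion] at hx
      obtain ⟨σ, hσS, hxf⟩ := hx
      obtain ⟨τ, hτ, hτeq⟩ := hS hσS
      cases hτeq
      exact h σ hτ hxf
    · obtain ⟨hxS, hn⟩ := hx
      cases hn
      exact Set.mem_insert _ _
end

section
/- Subsumption of Lisbon Logic (Theorem 3.4, Boolean model): For every program denotation f : Σ → Set (Option Σ) and all sets P, Q ⊆ Σ, the Total Outcome Logic triple ⟨P⟩ C ⟨◇Q⟩ is valid iff P is contained in the weakest possible precondition of Q; precisely: (∀ S : Set (Option Σ), S.Nonempty → S ⊆ some '' P → (F_f(S) ∩ (some '' Q)).Nonempty) ↔ (∀ σ ∈ P, (f σ ∩ (some '' Q)).Nonempty). -/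
/-- Subsumption of Lisbon Logic (Boolean model). -/
theorem lisbon_subsumption {St : Type*} (f : St → Set (Option St)) (P Q : Set St) :
    (∀ S : Set (Option St), S.Nonempty → S ⊆ some '' P →
        (Fext f S ∩ (some '' Q)).Nonempty) ↔
      (∀ σ ∈ P, (f σ ∩ (some '' Q)).Nonempty) := by
  constructor
  · intro h σ hσ
    obtain ⟨x, hx1, hx2⟩ := h {some σ} ⟨some σ, rfl⟩ (by
      rintro y rfl; exact ⟨σ, hσ, rfl⟩)
    refine ⟨x, ?_, hx2⟩
    rcases hx1 with hx1 | ⟨_, hn⟩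
    · simp only [Set.mem_iUnion] at hx1
      obtain ⟨τ, hτ, hxf⟩ := hx1
      simp only [Set.mem_setOf_eq, Set.mem_singleton_iff, Option.some_inj] at hτ
      subst hτ; exact hxf
    · obtain ⟨τ, _, rfl⟩ := hx2
      simp at hn
  · intro h S hS hsub
    obtain ⟨x, hx⟩ := hS
    obtain ⟨σ, hσP, rfl⟩ := hsub hx
    obtain ⟨y, hy1, hy2⟩ := h σ hσP
    refine ⟨y, Or.inl ?_, hy2⟩
    simp only [Set.mem_iUnion]
    exact ⟨σ, hx, hy1⟩
end

section
/- Subsumption of total-correctness Hoare Logic (Theorem 3.5, Boolean model): For every program denotation f : Σ → Set (Option Σ) and all sets P, Q ⊆ Σ, the Total Outcome Logic triple ⟨P⟩ C ⟨⊡Q⟩ is valid iff P is contained in the weakest precondition of Q; precisely: (∀ S : Set (Option Σ), S.Nonempty → S ⊆ some '' P → F_f(S) ⊆ some '' Q) ↔ (∀ σ ∈ P, f σ ⊆ some '' Q). -/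
/-- Subsumption of total-correctness Hoare Logic (Boolean model). -/
theorem hoare_total_subsumption {St : Type*} (f : St → Set (Option St)) (P Q : Set St) :
    (∀ S : Set (Option St), S.Nonempty → S ⊆ some '' P →
        Fext f S ⊆ some '' Q) ↔
      (∀ σ ∈ P, f σ ⊆ some '' Q) := by
  constructor
  · intro h σ hσ x hx
    apply h {some σ} ⟨some σ, rfl⟩ (by intro y hy; simp at hy; exact hy ▸ ⟨σ, hσ, rfl⟩)
    exact Or.inl (Set.mem_biUnion (by simp) hx)
  · intro h S _ hS x hx
    rcases hx with hx | ⟨hxS, hx⟩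
    · simp only [Set.mem_iUnion] at hx
      obtain ⟨σ, hσS, hxf⟩ := hx
      obtain ⟨τ, hτP, hτ⟩ := hS hσS
      exact h σ (Option.some.inj hτ ▸ hτP) hxf
    · obtain ⟨τ, _, hτ⟩ := hS hxS
      simp [Set.mem_singleton_iff.mp hx] at hτ
end

section
/- Scott-continuity of addition of weighting functions in the fusion order: Let U be a complete lattice with an addition + such that for every nonempty directed set D ⊆ U and every v ∈ U, sSup {u + v | u ∈ D} = (sSup D) + v, and for every nonempty downward-directed set D ⊆ U and every v ∈ U, sInf {u + v | u ∈ D} = (sInf D) + v. Fix m₂ : Option Σ → U and let D be a nonempty set of functions Option Σ → U directed under the fusion order. Then fsup {m₁ + m₂ | m₁ ∈ D} = fsup(D) + m₂, where addition of functions is pointwise. -/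
/-- The fusion order on functions `Option St → U`: weights of program states increase,
the weight of the divergence outcome `none` decreases. -/
def FusionLE {U : Type*} [Preorder U] {St : Type*} (m₁ m₂ : Option St → U) : Prop :=
  (∀ σ : St, m₁ (some σ) ≤ m₂ (some σ)) ∧ m₂ none ≤ m₁ none

/-- The fusion supremum of a set of functions `Option St → U`: pointwise supremum on
program states, pointwise infimum on the divergence outcome `none`. -/
noncomputable def fsup {U : Type*} [CompleteLattice U] {St : Type*}
    (D : Set (Option St → U)) : Option St → U := fun a =>
  Option.elim a (sInf ((fun m => m none) '' D)) (fun σ => sSup ((fun m => m (some σ)) '' D))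

/-- Scott-continuity of addition of weighting functions in the fusion order. -/
theorem fsup_add {U : Type*} [CompleteLattice U] [Add U] {St : Type*}
    (hSup : ∀ D : Set U, D.Nonempty → DirectedOn (· ≤ ·) D → ∀ v : U,
      sSup ((fun u => u + v) '' D) = sSup D + v)
    (hInf : ∀ D : Set U, D.Nonempty → DirectedOn (· ≥ ·) D → ∀ v : U,
      sInf ((fun u => u + v) '' D) = sInf D + v)
    (m₂ : Option St → U) (D : Set (Option St → U)) (hD : D.Nonempty)
    (hdir : DirectedOn FusionLE D) :
    fsup ((fun m₁ => m₁ + m₂) '' D) = fsup D + m₂ := by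
  funext a
  cases a with
  | none =>
    have himg : (fun m => m none) '' ((fun m₁ => m₁ + m₂) '' D)
        = (fun u => u + m₂ none) '' ((fun m => m none) '' D) := by
      ext x
      simp [Set.mem_image]
    have hdir' : DirectedOn (· ≥ ·) ((fun m => m none) '' D) := by
      rintro _ ⟨m, hm, rfl⟩ _ ⟨m', hm', rfl⟩
      obtain ⟨z, hz, h1, h2⟩ := hdir m hm m' hm'
      exact ⟨z none, ⟨z, hz, rfl⟩, h1.2, h2.2⟩
    show sInf _ = _
    rw [himg, hInf _ (hD.image _) hdir' (m₂ none)]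
    rfl
  | some σ =>
    have himg : (fun m => m (some σ)) '' ((fun m₁ => m₁ + m₂) '' D)
        = (fun u => u + m₂ (some σ)) '' ((fun m => m (some σ)) '' D) := by
      ext x
      simp [Set.mem_image]
    have hdir' : DirectedOn (· ≤ ·) ((fun m => m (some σ)) '' D) := by
      rintro _ ⟨m, hm, rfl⟩ _ ⟨m', hm', rfl⟩
      obtain ⟨z, hz, h1, h2⟩ := hdir m hm m' hm'
      exact ⟨z (some σ), ⟨z, hz, rfl⟩, h1.1 σ, h2.1 σ⟩
    show sSup _ = _
    rw [himg, hSup _ (hD.image _) hdir' (m₂ (some σ))]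
    rfl
end

section
/- Propagation of infinite divergence weight through Kleisli extension (indicative-weighting closure): Let U be a semiring and t ∈ U such that u + t = t for every u ∈ U, and u * t = t and t * u = t for every u ≠ 0. Let m : Option Σ →₀ U be a weighting function and f : Σ → (Option Σ →₀ U). If m(none) = t, or there exists τ ∈ Σ with m(some τ) ≠ 0 and f(τ)(none) = t, then bind(m, f)(none) = t. -/
/-- The unit of the weighting monad: `η a` sends `a` to `1` and everything else to `0`. -/
noncomputable def eta {U : Type*} [Semiring U] {St : Type*} (a : Option St) :
    Option St →₀ U :=
  Finsupp.single a 1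

/-- Kleisli extension of `f : St → (Option St →₀ U)` applied to `m : Option St →₀ U`:
`wbind m f y = (∑ over σ with some σ ∈ supp m, m (some σ) * f σ y) + m none * eta none y`. -/
noncomputable def wbind {U : Type*} [Semiring U] {St : Type*} (m : Option St →₀ U)
    (f : St → (Option St →₀ U)) : Option St →₀ U :=
  m.sum fun a u => Option.elim a (Finsupp.single none u) (fun σ => u • f σ)

/-- Right scalar action: `(rscale m u) a = m a * u`. -/
noncomputable def rscale {U : Type*} [Semiring U] {St : Type*} (m : Option St →₀ U) (u : U) :
    Option St →₀ U :=
  Finsupp.mapRange (· * u) (zero_mul u) m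

/-- Propagation of infinite divergence weight through Kleisli extension. -/
theorem wbind_strong_infinity {U : Type*} [Semiring U] {St : Type*}
    (t : U) (ht_add : ∀ u : U, u + t = t)
    (ht_mul : ∀ u : U, u ≠ 0 → u * t = t ∧ t * u = t)
    (m : Option St →₀ U) (f : St → (Option St →₀ U))
    (h : m none = t ∨ ∃ τ : St, m (some τ) ≠ 0 ∧ f τ none = t) :
    wbind m f none = t := by
  classical
  unfold wbind
  by_cases h0 : t = 0
  · subst h0
    have : ∀ u : U, u = 0 := fun u => by simpa using ht_add u
    exact this _
  have key : ∀ (s : Finset (Option St)) (g : Option St → U) (a : Option St),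
      a ∈ s → g a = t → (∑ x ∈ s, g x) = t := by
    intro s g a ha hg
    rw [← Finset.add_sum_erase s g ha, hg, add_comm]
    exact ht_add _
  have happ : (m.sum fun a u => Option.elim a (Finsupp.single none u) (fun σ => u • f σ)) none
      = ∑ a ∈ m.support, (Option.elim a (Finsupp.single none (m a)) (fun σ => m a • f σ)) none := by
    rw [Finsupp.sum, Finsupp.finset_sum_apply]
  rw [happ]
  rcases h with hm | ⟨τ, hτ, hf⟩
  · refine key _ _ none ?_ ?_
    · rw [Finsupp.mem_support_iff, hm]; exact h0
    · simp [hm]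
  · refine key _ _ (some τ) ?_ ?_
    · rwa [Finsupp.mem_support_iff]
    · simp only [Option.elim, Finsupp.smul_apply, smul_eq_mul, hf]
      exact (ht_mul _ hτ).1
end
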